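/- Let C ⊆ V be any set of vertices such that every v ∈ C satisfies spec(v), and let V* = C ∪ { v ∈ V \ C : ∃ u ∈ C, pref v = some u ∧ pref u = some v }. Then the set of edges of M(pref) having both endpoints in V* is a maximal matching of the subgraph of G induced by V*. -/

import Mathlib

variable {V : Type*} [Fintype V] [DecidableEq V]

/-- A configuration: every preference points to a neighbor. -/
def IsConfig (G : SimpleGraph V) (pref : V → Option V) : Prop :=
  ∀ v u : V, pref v = some u → G.Adj v u

/-- `v` proposed to a neighbor `u` which has not answered yet. -/
def Proposition (G : SimpleGraph V) (pref : V → Option V) (v : V) : Prop :=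
  ∃ u : V, G.Adj v u ∧ pref v = some u ∧ pref u = none

/-- `v` proposed to a neighbor `u` which proposed `v` back. -/
def Married (G : SimpleGraph V) (pref : V → Option V) (v : V) : Prop :=
  ∃ u : V, G.Adj v u ∧ pref v = some u ∧ pref u = some v

/-- `v` proposed to a neighbor `u` which proposed someone else. -/
def Condemned (G : SimpleGraph V) (pref : V → Option V) (v : V) : Prop :=
  ∃ u : V, G.Adj v u ∧ ∃ w : V, pref v = some u ∧ pref u = some w ∧ w ≠ v

/-- `v` has no hope of marriage: all its neighbors are married. -/
def Dead (G : SimpleGraph V) (pref : V → Option V) (v : V) : Prop :=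
  pref v = none ∧ ∀ u : V, G.Adj v u → Married G pref u

/-- `v` proposed no one and some neighbor is not married. -/
def Single (G : SimpleGraph V) (pref : V → Option V) (v : V) : Prop :=
  pref v = none ∧ ∃ u : V, G.Adj v u ∧ ¬ Married G pref u

/-- Local legitimacy predicate. -/
def Spec (G : SimpleGraph V) (pref : V → Option V) (v : V) : Prop :=
  Married G pref v ∨ Dead G pref v

/-- The matching set `M(pref)`: edges of `G` whose endpoints prefer each other. -/
def matchSet (G : SimpleGraph V) (pref : V → Option V) : Set (Sym2 V) :=
  {e | e ∈ G.edgeSet ∧ ∃ u w : V, e = s(u, w) ∧ pref u = some w ∧ pref w = some u}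

/-- `M` is a matching of `H`: a set of edges of `H` such that every vertex is
incident to at most one edge of `M`. -/
def IsMatchingOf (H : SimpleGraph V) (M : Set (Sym2 V)) : Prop :=
  M ⊆ H.edgeSet ∧ ∀ v : V, ∀ e ∈ M, ∀ f ∈ M, v ∈ e → v ∈ f → e = f

/-- `M` is a maximal matching of `H`: no matching of `H` strictly contains it. -/
def IsMaximalMatchingOf (H : SimpleGraph V) (M : Set (Sym2 V)) : Prop :=
  IsMatchingOf H M ∧ ¬ ∃ M' : Set (Sym2 V), IsMatchingOf H M' ∧ M ⊂ M'

/-- The subgraph of `G` induced by the vertex set `S` (as a graph on `V`). -/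
def inducedOn (G : SimpleGraph V) (S : Set V) : SimpleGraph V where
  Adj u v := G.Adj u v ∧ u ∈ S ∧ v ∈ S
  symm := ⟨fun u v ⟨h, hu, hv⟩ => ⟨h.symm, hv, hu⟩⟩
  loopless := ⟨fun v ⟨h, _, _⟩ => G.irrefl h⟩

/-- Guard of the marriage rule of SSMM. -/
def GuardM (G : SimpleGraph V) (pref : V → Option V) (v : V) : Prop :=
  pref v = none ∧ ∃ u : V, G.Adj v u ∧ pref u = some v

/-- Guard of the seduction rule of SSMM. -/
def GuardS (G : SimpleGraph V) (pref : V → Option V) (v : V) : Prop :=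
  pref v = none ∧ (∀ u : V, G.Adj v u → pref u ≠ some v) ∧
    ∃ u : V, G.Adj v u ∧ pref u = none

/-- Guard of the abandonment rule of SSMM. -/
def GuardA (G : SimpleGraph V) (pref : V → Option V) (v : V) : Prop :=
  ∃ u : V, G.Adj v u ∧ pref v = some u ∧ pref u ≠ some v ∧ pref u ≠ none

/-- A vertex is activable if at least one guard of SSMM holds at it. -/
def Activable (G : SimpleGraph V) (pref : V → Option V) (v : V) : Prop :=
  GuardM G pref v ∨ GuardS G pref v ∨ GuardA G pref v

/-! Every vertex of `V*` is married or dead, and `V*` is closed under taking mutual partners.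
Hence every edge of the induced subgraph has a married endpoint, whose marriage edge lies in the
restricted matching; a matching that covers an endpoint of every edge is maximal. -/

section Matchings

omit [Fintype V] [DecidableEq V]

variable {G : SimpleGraph V} {pref : V → Option V}

lemma exists_pref_eq_of_mem_matchSet {e : Sym2 V} {v : V} (he : e ∈ matchSet G pref)
    (hv : v ∈ e) : ∃ p, pref v = some p ∧ e = s(v, p) := by
  obtain ⟨-, u, w, rfl, hu, hw⟩ := he
  rcases Sym2.mem_iff.mp hv with rfl | rfl
  · exact ⟨w, hu, rfl⟩
  · exact ⟨u, hw, Sym2.eq_swap⟩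

lemma isMatchingOf_matchSet : IsMatchingOf G (matchSet G pref) := by
  refine ⟨fun e he => he.1, fun v e he f hf hve hvf => ?_⟩
  obtain ⟨p, hp, rfl⟩ := exists_pref_eq_of_mem_matchSet he hve
  obtain ⟨q, hq, rfl⟩ := exists_pref_eq_of_mem_matchSet hf hvf
  rw [Option.some.inj (hp.symm.trans hq)]

lemma IsMatchingOf.inducedOn {M : Set (Sym2 V)} (hM : IsMatchingOf G M) (S : Set V) :
    IsMatchingOf (inducedOn G S) {e ∈ M | ∀ w ∈ e, w ∈ S} := by
  refine ⟨?_, fun v e he f hf => hM.2 v e he.1 f hf.1⟩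
  rintro e ⟨heM, heS⟩
  induction e using Sym2.ind with
  | h a b => exact ⟨hM.1 heM, heS a (Sym2.mem_mk_left a b), heS b (Sym2.mem_mk_right a b)⟩

lemma isMaximalMatchingOf_of_forall_adj {H : SimpleGraph V} {M : Set (Sym2 V)}
    (hM : IsMatchingOf H M) (hcover : ∀ a b, H.Adj a b → ∃ f ∈ M, a ∈ f ∨ b ∈ f) :
    IsMaximalMatchingOf H M := by
  refine ⟨hM, fun ⟨M', hM', hMM'⟩ => ?_⟩
  obtain ⟨e, heM', heM⟩ := Set.exists_of_ssubset hMM'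
  induction e using Sym2.ind with
  | h a b =>
    obtain ⟨f, hfM, haf | hbf⟩ := hcover a b (hM'.1 heM')
    · exact heM (hM'.2 a _ heM' f (hMM'.1 hfM) (Sym2.mem_mk_left a b) haf ▸ hfM)
    · exact heM (hM'.2 b _ heM' f (hMM'.1 hfM) (Sym2.mem_mk_right a b) hbf ▸ hfM)

end Matchings

section PartnerClosure

omit [Fintype V] [DecidableEq V]

variable {G : SimpleGraph V} {pref : V → Option V} {C : Set V}

/-- The set `V*`. -/
def withPartners (pref : V → Option V) (C : Set V) : Set V :=
  C ∪ {v | v ∉ C ∧ ∃ u ∈ C, pref v = some u ∧ pref u = some v}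

lemma mem_withPartners_of_pref_eq {a u : V} (ha : a ∈ withPartners pref C)
    (hau : pref a = some u) (hua : pref u = some a) : u ∈ withPartners pref C := by
  rcases ha with ha | ⟨-, u', hu'C, hau', -⟩
  · by_cases hu : u ∈ C
    · exact Or.inl hu
    · exact Or.inr ⟨hu, a, ha, hua, hau⟩
  · obtain rfl : u' = u := Option.some.inj (hau'.symm.trans hau)
    exact Or.inl hu'C

/-- A vertex outside `C` is married through its partner in `C`, which cannot be dead since it
has a preference. -/
lemma spec_of_mem_withPartners (hC : ∀ v ∈ C, Spec G pref v) {v : V}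
    (hv : v ∈ withPartners pref C) : Spec G pref v := by
  rcases hv with hv | ⟨-, u, huC, hvu, huv⟩
  · exact hC v hv
  · rcases hC u huC with ⟨w, huw, hu, -⟩ | ⟨hu, -⟩
    · obtain rfl : w = v := Option.some.inj (hu.symm.trans huv)
      exact Or.inl ⟨u, huw.symm, hvu, huv⟩
    · simp [hu] at huv

lemma exists_mem_restrict_matchSet_of_married {v : V} (hv : v ∈ withPartners pref C)
    (hmarried : Married G pref v) :
    ∃ f ∈ {e ∈ matchSet G pref | ∀ w ∈ e, w ∈ withPartners pref C}, v ∈ f := by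
  obtain ⟨u, hvu, hpv, hpu⟩ := hmarried
  have hu := mem_withPartners_of_pref_eq hv hpv hpu
  refine ⟨s(v, u), ⟨⟨hvu, v, u, rfl, hpv, hpu⟩, fun w hw => ?_⟩, Sym2.mem_mk_left v u⟩
  rcases Sym2.mem_iff.mp hw with rfl | rfl <;> assumption

end PartnerClosure

theorem spec_set_maximal_matching_general (G : SimpleGraph V) (pref : V → Option V)
    (C : Set V) (hC : ∀ v ∈ C, Spec G pref v)
    (Vstar : Set V)
    (hVstar : Vstar = C ∪
      {v : V | v ∉ C ∧ ∃ u ∈ C, pref v = some u ∧ pref u = some v}) :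
    IsMaximalMatchingOf (inducedOn G Vstar)
      {e ∈ matchSet G pref | ∀ w ∈ e, w ∈ Vstar} := by
  change Vstar = withPartners pref C at hVstar
  subst hVstar
  refine isMaximalMatchingOf_of_forall_adj (isMatchingOf_matchSet.inducedOn _) ?_
  rintro a b ⟨hab, ha, hb⟩
  rcases spec_of_mem_withPartners hC ha with hmarried | ⟨-, hdead⟩
  · obtain ⟨f, hf, haf⟩ := exists_mem_restrict_matchSet_of_married ha hmarried
    exact ⟨f, hf, Or.inl haf⟩
  · obtain ⟨f, hf, hbf⟩ := exists_mem_restrict_matchSet_of_married hb (hdead b hab)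
    exact ⟨f, hf, Or.inr hbf⟩

/-- if every vertex of `C` satisfies `spec`, then the restriction
of `M(pref)` to `V* = C ∪ {v ∉ C | ∃ u ∈ C, pref v = u ∧ pref u = v}` is a
maximal matching of the subgraph of `G` induced by `V*`. -/
theorem spec_set_maximal_matching (G : SimpleGraph V) (pref : V → Option V)
    (hconf : IsConfig G pref) (C : Set V) (hC : ∀ v ∈ C, Spec G pref v)
    (Vstar : Set V)
    (hVstar : Vstar = C ∪
      {v : V | v ∉ C ∧ ∃ u ∈ C, pref v = some u ∧ pref u = some v}) :
    IsMaximalMatchingOf (inducedOn G Vstar)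
      {e ∈ matchSet G pref | ∀ w ∈ e, w ∈ Vstar} :=
  spec_set_maximal_matching_general G pref C hC Vstar hVstar
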